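/- Classical conditional packing lemma (random codebook form): With the setup of the classical conditional packing lemma, fix M ∈ ℕ, a message index m ∈ {1,…,M}, n ∈ ℕ and δ > 0. Consider the random experiment in which Uⁿ is drawn with probability ∏ᵢ p_U(uᵢ), the codewords Xⁿ(1),…,Xⁿ(M) ∈ 𝒳ⁿ are drawn conditionally independently with probabilities ∏ᵢ p_{X|U}(·|Uᵢ), and Yⁿ is drawn with probability ∏ᵢ w(·|Xⁿ(m)ᵢ, Uᵢ). Then the probability (a finite sum of products of the above weights times an indicator) that there exists m′ ≠ m with Yⁿ ∈ T^n_δ(Y|Xⁿ(m′),Uⁿ) and Yⁿ ∈ T^n_δ(Y|Uⁿ) is at most M · 2^{−n(I(X;Y|U) − 2δ)}. -/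

import Mathlib

/-! Union bound over the wrong codewords `m' ≠ m`. For a fixed `m'`, typicality with `Xⁿ(m')`
gives `1 ≤ 2^{n(H(Y|X,U)+δ)} w(Yⁿ|Xⁿ(m'),Uⁿ)`. Since `Xⁿ(m)` and `Xⁿ(m')` are independent given
`Uⁿ`, averaging over the codebook turns `w(Yⁿ|Xⁿ(m)) w(Yⁿ|Xⁿ(m'))` into `w̄(Yⁿ|Uⁿ)²`; typicality
for `w̄` bounds one factor by `2^{-n(H(Y|U)-δ)}` and the other sums to `1` over `Yⁿ`. -/

open scoped BigOperators

/-- Shannon entropy (base 2) of a probability vector. -/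
noncomputable def shannonH {α : Type*} [Fintype α] (p : α → ℝ) : ℝ :=
  ∑ a, -(p a * Real.logb 2 (p a))

section
variable {U X Y : Type*} [Fintype U] [Fintype X] [Fintype Y]

/-- The averaged channel `w̄(y|u) = ∑ₓ p_{X|U}(x|u) w(y|x,u)`. -/
noncomputable def wbar (pXU : U → X → ℝ) (w : X → U → Y → ℝ) : U → Y → ℝ :=
  fun u y => ∑ x, pXU u x * w x u y

/-- The conditional entropy `H(Y|X,U)`. -/
noncomputable def HYXU (pU : U → ℝ) (pXU : U → X → ℝ) (w : X → U → Y → ℝ) : ℝ :=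
  ∑ u, ∑ x, pU u * pXU u x * shannonH (w x u)

/-- The conditional entropy `H(Y|U)` of the averaged channel. -/
noncomputable def HYU (pU : U → ℝ) (pXU : U → X → ℝ) (w : X → U → Y → ℝ) : ℝ :=
  ∑ u, pU u * shannonH (wbar pXU w u)

/-- `yₙ ∈ T^n_δ(Y|xₙ,uₙ)`, the conditionally typical set for the channel `w`. -/
def CondTypicalXU (pU : U → ℝ) (pXU : U → X → ℝ) (w : X → U → Y → ℝ) (n : ℕ) (δ : ℝ)
    (xₙ : Fin n → X) (uₙ : Fin n → U) (yₙ : Fin n → Y) : Prop :=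
  0 < ∏ i, w (xₙ i) (uₙ i) (yₙ i) ∧
    |(-(1 / (n : ℝ)) * Real.logb 2 (∏ i, w (xₙ i) (uₙ i) (yₙ i))) - HYXU pU pXU w| ≤ δ

/-- `yₙ ∈ T^n_δ(Y|uₙ)`, the conditionally typical set for the averaged channel `w̄`. -/
def CondTypicalU (pU : U → ℝ) (pXU : U → X → ℝ) (w : X → U → Y → ℝ) (n : ℕ) (δ : ℝ)
    (uₙ : Fin n → U) (yₙ : Fin n → Y) : Prop :=
  0 < ∏ i, wbar pXU w (uₙ i) (yₙ i) ∧
    |(-(1 / (n : ℝ)) * Real.logb 2 (∏ i, wbar pXU w (uₙ i) (yₙ i))) - HYU pU pXU w| ≤ δ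

open Finset

theorem sum_pi_prod_eq_one {ι α : Type*} [Fintype ι] [DecidableEq ι] [Fintype α]
    {f : ι → α → ℝ} (hf : ∀ i, ∑ a, f i a = 1) : ∑ c : ι → α, ∏ i, f i (c i) = 1 := by
  rw [← Fintype.prod_sum]
  simp [hf]

theorem sum_pi_prod_mul_apply_mul_apply {ι α R : Type*} [Fintype ι] [DecidableEq ι] [Fintype α]
    [CommSemiring R] {q : α → R} (hq : ∑ x, q x = 1) (g h : α → R) {i j : ι} (hij : i ≠ j) :
    ∑ c : ι → α, (∏ k, q (c k)) * g (c i) * h (c j) = (∑ x, q x * g x) * ∑ x, q x * h x := by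
  let F : ι → α → R := fun k x => q x * ((if k = i then g x else 1) * (if k = j then h x else 1))
  have sum_F : ∀ k, ∑ x, F k x =
      (if k = i then ∑ x, q x * g x else 1) * (if k = j then ∑ x, q x * h x else 1) := by
    intro k
    by_cases hi : k = i
    · subst hi; simp [F, hij]
    · by_cases hj : k = j
      · subst hj; simp [F, hi]
      · simp [F, hi, hj, hq]
  calc ∑ c : ι → α, (∏ k, q (c k)) * g (c i) * h (c j) = ∑ c : ι → α, ∏ k, F k (c k) := by
        refine sum_congr rfl fun c _ => ?_
        simp only [F, prod_mul_distrib, prod_ite_eq', mem_univ, if_true, mul_assoc]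
    _ = ∏ k, ∑ x, F k x := (Fintype.prod_sum F).symm
    _ = _ := by simp only [sum_F, prod_mul_distrib, prod_ite_eq', mem_univ, if_true]

theorem ite_exists_le_sum_ite {ι : Type*} [Fintype ι] (p : ι → Prop) [Decidable (∃ k, p k)]
    [DecidablePred p] : (if ∃ k, p k then (1 : ℝ) else 0) ≤ ∑ k, if p k then 1 else 0 := by
  split_ifs with h
  · obtain ⟨k, hk⟩ := h
    calc (1 : ℝ) = if p k then 1 else 0 := (if_pos hk).symm
      _ ≤ ∑ k, if p k then 1 else 0 :=
        single_le_sum (f := fun l => if p l then (1 : ℝ) else 0)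
          (fun l _ => by split_ifs <;> norm_num) (mem_univ k)
  · exact sum_nonneg fun l _ => by split_ifs <;> norm_num

section Packing

variable {ι α β : Type*} [Fintype ι] [DecidableEq ι] [Fintype α] [Fintype β]
  {q : α → ℝ} {W : α → β → ℝ} {S : α → β → Prop} {T : β → Prop}
  [∀ x y, Decidable (S x y)] [DecidablePred T] {a b : ℝ}

theorem sum_codebook_confusion_le (hq : ∀ x, 0 ≤ q x) (hq1 : ∑ x, q x = 1)
    (hW : ∀ x y, 0 ≤ W x y) (hW1 : ∀ x, ∑ y, W x y = 1) (ha : 0 < a) (hb : 0 ≤ b)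
    (hS : ∀ x y, S x y → a ≤ W x y) (hT : ∀ y, T y → ∑ x, q x * W x y ≤ b)
    {k m : ι} (hkm : k ≠ m) :
    ∑ C : ι → α, ∑ y, (∏ l, q (C l)) * W (C m) y * (if S (C k) y ∧ T y then 1 else 0) ≤
      b / a := by
  set Wbar : β → ℝ := fun y => ∑ x, q x * W x y
  have hWbar : ∀ y, 0 ≤ Wbar y := fun y => sum_nonneg fun x _ => mul_nonneg (hq x) (hW x y)
  have indicator_le : ∀ x y, (if S x y ∧ T y then (1 : ℝ) else 0) ≤
      W x y / a * if T y then 1 else 0 := by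
    intro x y
    split_ifs with hST hT' hT'
    · rw [mul_one, one_le_div ha]; exact hS x y hST.1
    · exact absurd hST.2 hT'
    · positivity [hW x y]
    · rw [mul_zero]
  have square_le : ∀ y, (if T y then 1 else 0) / a * (Wbar y * Wbar y) ≤ b / a * Wbar y := by
    intro y
    split_ifs with hTy
    · rw [one_div_mul_eq_div, div_mul_eq_mul_div]
      gcongr
      exacts [hWbar y, hT y hTy]
    · rw [zero_div, zero_mul]; exact mul_nonneg (div_nonneg hb ha.le) (hWbar y)
  calc ∑ C : ι → α, ∑ y, (∏ l, q (C l)) * W (C m) y * (if S (C k) y ∧ T y then 1 else 0)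
      ≤ ∑ C : ι → α, ∑ y, (∏ l, q (C l)) * W (C m) y * (W (C k) y / a * if T y then 1 else 0) :=
        sum_le_sum fun C _ => sum_le_sum fun y _ => mul_le_mul_of_nonneg_left
          (indicator_le _ _) (mul_nonneg (prod_nonneg fun l _ => hq _) (hW _ _))
    _ = ∑ y, (if T y then 1 else 0) / a *
          ∑ C : ι → α, (∏ l, q (C l)) * W (C m) y * W (C k) y := by
        rw [sum_comm]
        refine sum_congr rfl fun y _ => ?_
        rw [mul_sum]
        exact sum_congr rfl fun C _ => by ring
    _ = ∑ y, (if T y then 1 else 0) / a * (Wbar y * Wbar y) := by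
        refine sum_congr rfl fun y _ => ?_
        rw [sum_pi_prod_mul_apply_mul_apply hq1 (W · y) (W · y) hkm.symm]
    _ ≤ ∑ y, b / a * Wbar y := sum_le_sum fun y _ => square_le y
    _ = b / a := by
        rw [← mul_sum, sum_comm]
        simp only [← mul_sum, hW1, mul_one, hq1]

theorem sum_codebook_packing_le (hq : ∀ x, 0 ≤ q x) (hq1 : ∑ x, q x = 1)
    (hW : ∀ x y, 0 ≤ W x y) (hW1 : ∀ x, ∑ y, W x y = 1) (ha : 0 < a) (hb : 0 ≤ b)
    (hS : ∀ x y, S x y → a ≤ W x y) (hT : ∀ y, T y → ∑ x, q x * W x y ≤ b) (m : ι)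
    [∀ (C : ι → α) y, Decidable (∃ k, k ≠ m ∧ S (C k) y ∧ T y)] :
    ∑ C : ι → α, ∑ y, (∏ l, q (C l)) * W (C m) y *
        (if ∃ k, k ≠ m ∧ S (C k) y ∧ T y then 1 else 0) ≤ Fintype.card ι * (b / a) := by
  calc ∑ C : ι → α, ∑ y, (∏ l, q (C l)) * W (C m) y *
          (if ∃ k, k ≠ m ∧ S (C k) y ∧ T y then 1 else 0)
      ≤ ∑ C : ι → α, ∑ y, ∑ k, (∏ l, q (C l)) * W (C m) y *
          (if k ≠ m ∧ S (C k) y ∧ T y then 1 else 0) :=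
        sum_le_sum fun C _ => sum_le_sum fun y _ => by
          rw [← mul_sum]
          exact mul_le_mul_of_nonneg_left (ite_exists_le_sum_ite _)
            (mul_nonneg (prod_nonneg fun l _ => hq _) (hW _ _))
    _ = ∑ k, ∑ C : ι → α, ∑ y, (∏ l, q (C l)) * W (C m) y *
          (if k ≠ m ∧ S (C k) y ∧ T y then 1 else 0) :=
        (sum_congr rfl fun C _ => sum_comm).trans sum_comm
    _ ≤ ∑ _k : ι, b / a := sum_le_sum fun k _ => by
        by_cases hkm : k = m
        · simp only [hkm, ne_eq, not_true_eq_false, false_and, if_false, mul_zero, sum_const_zero]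
          exact div_nonneg hb ha.le
        · simpa only [ne_eq, hkm, not_false_eq_true, true_and] using
            sum_codebook_confusion_le hq hq1 hW hW1 ha hb hS hT hkm
    _ = Fintype.card ι * (b / a) := by rw [sum_const, card_univ, nsmul_eq_mul]

end Packing

theorem two_rpow_le_prod_and_prod_le_of_abs_sub_le {n : ℕ} {f : Fin n → ℝ} {H δ : ℝ}
    (hpos : 0 < ∏ i, f i) (h : |-(1 / (n : ℝ)) * Real.logb 2 (∏ i, f i) - H| ≤ δ) :
    (2 : ℝ) ^ (-(n : ℝ) * (H + δ)) ≤ ∏ i, f i ∧ ∏ i, f i ≤ (2 : ℝ) ^ (-(n : ℝ) * (H - δ)) := by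
  rcases n.eq_zero_or_pos with rfl | hn
  · simp
  rw [← Real.le_logb_iff_rpow_le one_lt_two hpos, ← Real.logb_le_iff_le_rpow one_lt_two hpos]
  have hn' : (0 : ℝ) < n := Nat.cast_pos.mpr hn
  set L := Real.logb 2 (∏ i, f i)
  have hL : -(1 / (n : ℝ)) * L = -L / n := by ring
  rw [hL, abs_le, le_sub_iff_add_le, sub_le_iff_le_add, le_div_iff₀ hn', div_le_iff₀ hn'] at h
  constructor <;> linarith [h.1, h.2]

theorem prod_wbar_eq_sum {U X Y : Type*} [Fintype U] [Fintype X] [Fintype Y] {n : ℕ}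
    (pXU : U → X → ℝ) (w : X → U → Y → ℝ) (uₙ : Fin n → U) (yₙ : Fin n → Y) :
    ∏ i, wbar pXU w (uₙ i) (yₙ i) =
      ∑ xₙ : Fin n → X, (∏ i, pXU (uₙ i) (xₙ i)) * ∏ i, w (xₙ i) (uₙ i) (yₙ i) := by
  simp_rw [← prod_mul_distrib]
  exact Fintype.prod_sum fun i x => pXU (uₙ i) x * w x (uₙ i) (yₙ i)

open scoped Classical in
theorem sum_codebook_condTypical_le (pU : U → ℝ) (pXU : U → X → ℝ) (hpXU : ∀ u x, 0 ≤ pXU u x)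
    (hpXUsum : ∀ u, ∑ x, pXU u x = 1) (w : X → U → Y → ℝ) (hw : ∀ x u y, 0 ≤ w x u y)
    (hwsum : ∀ x u, ∑ y, w x u y = 1) {M : ℕ} (m : Fin M) {n : ℕ} (δ : ℝ) (uₙ : Fin n → U) :
    ∑ C : Fin M → Fin n → X, ∑ yₙ : Fin n → Y,
      (∏ m' : Fin M, ∏ i, pXU (uₙ i) (C m' i)) * (∏ i, w (C m i) (uₙ i) (yₙ i)) *
        (if ∃ m' : Fin M, m' ≠ m ∧ CondTypicalXU pU pXU w n δ (C m') uₙ yₙ ∧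
            CondTypicalU pU pXU w n δ uₙ yₙ then 1 else 0) ≤
      M * (2 : ℝ) ^ (-(n : ℝ) * ((HYU pU pXU w - HYXU pU pXU w) - 2 * δ)) := by
  have packing := sum_codebook_packing_le (q := fun xₙ => ∏ i, pXU (uₙ i) (xₙ i))
    (W := fun xₙ yₙ => ∏ i, w (xₙ i) (uₙ i) (yₙ i))
    (S := fun xₙ yₙ => CondTypicalXU pU pXU w n δ xₙ uₙ yₙ)
    (T := CondTypicalU pU pXU w n δ uₙ)
    (a := (2 : ℝ) ^ (-(n : ℝ) * (HYXU pU pXU w + δ)))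
    (b := (2 : ℝ) ^ (-(n : ℝ) * (HYU pU pXU w - δ)))
    (fun _ => prod_nonneg fun i _ => hpXU _ _) (sum_pi_prod_eq_one fun i => hpXUsum (uₙ i))
    (fun _ _ => prod_nonneg fun i _ => hw _ _ _)
    (fun _ => sum_pi_prod_eq_one fun i => hwsum _ (uₙ i)) (by positivity) (by positivity)
    (fun _ _ h => (two_rpow_le_prod_and_prod_le_of_abs_sub_le h.1 h.2).1)
    (fun yₙ h => by
      rw [← prod_wbar_eq_sum]
      exact (two_rpow_le_prod_and_prod_le_of_abs_sub_le h.1 h.2).2) m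
  have exponent : (2 : ℝ) ^ (-(n : ℝ) * (HYU pU pXU w - δ)) /
      (2 : ℝ) ^ (-(n : ℝ) * (HYXU pU pXU w + δ)) =
      (2 : ℝ) ^ (-(n : ℝ) * ((HYU pU pXU w - HYXU pU pXU w) - 2 * δ)) := by
    rw [← Real.rpow_sub two_pos]
    ring_nf
  rwa [Fintype.card_fin, exponent] at packing

open scoped Classical in
theorem classical_conditional_packing_codebook_general
    (pU : U → ℝ) (hpU : ∀ u, 0 ≤ pU u) (hpUsum : ∑ u, pU u = 1)
    (pXU : U → X → ℝ) (hpXU : ∀ u x, 0 ≤ pXU u x) (hpXUsum : ∀ u, ∑ x, pXU u x = 1)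
    (w : X → U → Y → ℝ) (hw : ∀ x u y, 0 ≤ w x u y) (hwsum : ∀ x u, ∑ y, w x u y = 1)
    (M : ℕ) (m : Fin M) (n : ℕ) (δ : ℝ) :
    ∑ uₙ : Fin n → U, ∑ C : Fin M → Fin n → X, ∑ yₙ : Fin n → Y,
      (∏ i, pU (uₙ i)) * (∏ m' : Fin M, ∏ i, pXU (uₙ i) (C m' i)) *
        (∏ i, w (C m i) (uₙ i) (yₙ i)) *
        (if ∃ m' : Fin M, m' ≠ m ∧ CondTypicalXU pU pXU w n δ (C m') uₙ yₙ ∧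
            CondTypicalU pU pXU w n δ uₙ yₙ then 1 else 0) ≤
      (M : ℝ) * (2 : ℝ) ^ (-(n : ℝ) * ((HYU pU pXU w - HYXU pU pXU w) - 2 * δ)) := by
  set B := (M : ℝ) * (2 : ℝ) ^ (-(n : ℝ) * ((HYU pU pXU w - HYXU pU pXU w) - 2 * δ))
  calc _ = ∑ uₙ : Fin n → U, (∏ i, pU (uₙ i)) * ∑ C : Fin M → Fin n → X, ∑ yₙ : Fin n → Y,
          (∏ m' : Fin M, ∏ i, pXU (uₙ i) (C m' i)) * (∏ i, w (C m i) (uₙ i) (yₙ i)) *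
            (if ∃ m' : Fin M, m' ≠ m ∧ CondTypicalXU pU pXU w n δ (C m') uₙ yₙ ∧
              CondTypicalU pU pXU w n δ uₙ yₙ then 1 else 0) := by
        simp only [mul_sum, mul_assoc]
    _ ≤ ∑ uₙ : Fin n → U, (∏ i, pU (uₙ i)) * B := sum_le_sum fun uₙ _ =>
        mul_le_mul_of_nonneg_left (sum_codebook_condTypical_le pU pXU hpXU hpXUsum w hw hwsum m δ uₙ)
          (prod_nonneg fun i _ => hpU _)
    _ = B := by rw [← sum_mul, sum_pi_prod_eq_one fun _ => hpUsum, one_mul]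

open scoped Classical in
/-- Classical conditional packing lemma (random codebook form): the probability that the
channel output for codeword `m` lands in the conditionally typical set of some other codeword
(also being typical with respect to the averaged channel) is at most
`M · 2^{−n(I(X;Y|U) − 2δ)}`. -/
theorem classical_conditional_packing_codebook
    (pU : U → ℝ) (hpU : ∀ u, 0 ≤ pU u) (hpUsum : ∑ u, pU u = 1)
    (pXU : U → X → ℝ) (hpXU : ∀ u x, 0 ≤ pXU u x) (hpXUsum : ∀ u, ∑ x, pXU u x = 1)
    (w : X → U → Y → ℝ) (hw : ∀ x u y, 0 ≤ w x u y) (hwsum : ∀ x u, ∑ y, w x u y = 1)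
    (M : ℕ) (m : Fin M) (n : ℕ) (δ : ℝ) (hδ : 0 < δ) :
    ∑ uₙ : Fin n → U, ∑ C : Fin M → Fin n → X, ∑ yₙ : Fin n → Y,
      (∏ i, pU (uₙ i)) * (∏ m' : Fin M, ∏ i, pXU (uₙ i) (C m' i)) *
        (∏ i, w (C m i) (uₙ i) (yₙ i)) *
        (if ∃ m' : Fin M, m' ≠ m ∧ CondTypicalXU pU pXU w n δ (C m') uₙ yₙ ∧
            CondTypicalU pU pXU w n δ uₙ yₙ then 1 else 0) ≤
      (M : ℝ) * (2 : ℝ) ^ (-(n : ℝ) * ((HYU pU pXU w - HYXU pU pXU w) - 2 * δ)) :=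
  classical_conditional_packing_codebook_general pU hpU hpUsum pXU hpXU hpXUsum w hw hwsum M m n δ

end
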